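/- arXiv:2102.12098 — 8 statements merged into one kernel-verified Lean document; each statement's English description precedes it below -/
import Mathlib

section
/- The Whiteman generalized cyclotomic classes of order 2 partition the units modulo N: Z_N^* = D_0 ∪ D_1 and D_0 ∩ D_1 = ∅; in particular each of D_0 and D_1 has exactly e = (p−1)(q−1)/2 elements. -/
/-!
Write `N = p q` and `e = lcm (p - 1) (q - 1)`, which is `(p - 1)(q - 1) / 2` since the gcd is `2`.
By the Chinese remainder theorem `g^s x^i ≡ g^t x^j (mod N)` holds exactly when
`s + i ≡ t + j (mod p - 1)` and `s ≡ t (mod q - 1)`. Hence `s ↦ g^s x^i` is injective on `[0, e)`,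
and `D_0`, `D_1` are disjoint because `p - 1` and `q - 1` are both even while the exponents mod `p - 1`
differ by one. So `D_0 ∪ D_1` consists of `2e = φ(N)` units and exhausts `Z_N^*`.
-/

open Finset

theorem Nat.eq_of_modEq_of_modEq_of_lt_lcm {a b m n : ℕ} (hm : a ≡ b [MOD m])
    (hn : a ≡ b [MOD n]) (ha : a < m.lcm n) (hb : b < m.lcm n) : a = b := by
  wlog hab : a ≤ b generalizing a b
  · exact (this hm.symm hn.symm hb ha (by omega)).symm
  have hdvd : m.lcm n ∣ b - a :=
    Nat.lcm_dvd ((Nat.modEq_iff_dvd' hab).mp hm) ((Nat.modEq_iff_dvd' hab).mp hn)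
  have := Nat.eq_zero_of_dvd_of_lt hdvd (by omega)
  omega

namespace IsPrimitiveRoot

variable {n k g : ℕ}

theorem natCast_pow_modEq_iff (hg : IsPrimitiveRoot (g : ZMod n) k) (hk : k ≠ 0) {a b : ℕ} :
    g ^ a ≡ g ^ b [MOD n] ↔ a ≡ b [MOD k] := by
  rw [← ZMod.natCast_eq_natCast_iff, Nat.cast_pow, Nat.cast_pow,
    (hg.isOfFinOrder hk).pow_eq_pow_iff_modEq, ← hg.eq_orderOf]

theorem natCast_coprime (hg : IsPrimitiveRoot (g : ZMod n) k) (hk : k ≠ 0) : g.Coprime n :=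
  (ZMod.isUnit_iff_coprime g n).mp (hg.isUnit hk)

end IsPrimitiveRoot

def whitemanClass (m n g x e i : ℕ) : Finset ℕ :=
  (range e).image fun s => g ^ s * x ^ i % (m * n)

section Whiteman

variable {m n g x k l : ℕ}

theorem pow_mul_pow_modEq_iff (hmn : m.Coprime n)
    (hgm : IsPrimitiveRoot (g : ZMod m) k) (hk : k ≠ 0)
    (hgn : IsPrimitiveRoot (g : ZMod n) l) (hl : l ≠ 0)
    (hxm : x ≡ g [MOD m]) (hxn : x ≡ 1 [MOD n]) (s i t j : ℕ) :
    g ^ s * x ^ i ≡ g ^ t * x ^ j [MOD m * n] ↔ s + i ≡ t + j [MOD k] ∧ s ≡ t [MOD l] := by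
  have hm (a b : ℕ) : g ^ a * x ^ b ≡ g ^ (a + b) [MOD m] := by
    rw [pow_add]; exact .mul_left _ (hxm.pow b)
  have hn (a b : ℕ) : g ^ a * x ^ b ≡ g ^ a [MOD n] := by
    simpa using Nat.ModEq.mul_left (g ^ a) (hxn.pow b)
  rw [← Nat.modEq_and_modEq_iff_modEq_mul hmn, ← hgm.natCast_pow_modEq_iff hk,
    ← hgn.natCast_pow_modEq_iff hl]
  unfold Nat.ModEq at hm hn ⊢
  rw [hm s i, hm t j, hn s i, hn t j]

theorem card_whitemanClass (hmn : m.Coprime n)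
    (hgm : IsPrimitiveRoot (g : ZMod m) k) (hk : k ≠ 0)
    (hgn : IsPrimitiveRoot (g : ZMod n) l) (hl : l ≠ 0)
    (hxm : x ≡ g [MOD m]) (hxn : x ≡ 1 [MOD n]) (i : ℕ) :
    (whitemanClass m n g x (k.lcm l) i).card = k.lcm l := by
  refine (card_image_of_injOn fun s hs t ht hst => ?_).trans (card_range _)
  obtain ⟨hsk, hsl⟩ := (pow_mul_pow_modEq_iff hmn hgm hk hgn hl hxm hxn s i t i).mp hst
  exact Nat.eq_of_modEq_of_modEq_of_lt_lcm (Nat.ModEq.add_right_cancel' i hsk) hsl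
    (mem_range.mp hs) (mem_range.mp ht)

theorem disjoint_whitemanClass (hmn : m.Coprime n)
    (hgm : IsPrimitiveRoot (g : ZMod m) k) (hk : k ≠ 0)
    (hgn : IsPrimitiveRoot (g : ZMod n) l) (hl : l ≠ 0)
    (hxm : x ≡ g [MOD m]) (hxn : x ≡ 1 [MOD n]) (h2k : 2 ∣ k) (h2l : 2 ∣ l) (e : ℕ) :
    Disjoint (whitemanClass m n g x e 0) (whitemanClass m n g x e 1) := by
  simp only [whitemanClass, disjoint_left, mem_image, not_exists, not_and]
  rintro _ ⟨s, -, rfl⟩ t - hts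
  obtain ⟨hsk, hsl⟩ := (pow_mul_pow_modEq_iff hmn hgm hk hgn hl hxm hxn s 0 t 1).mp hts.symm
  have hs_odd := hsk.of_dvd h2k
  have hs_even := hsl.of_dvd h2l
  unfold Nat.ModEq at hs_odd hs_even
  omega

theorem whitemanClass_subset_coprime (hmn0 : 0 < m * n)
    (hgm : IsPrimitiveRoot (g : ZMod m) k) (hk : k ≠ 0)
    (hgn : IsPrimitiveRoot (g : ZMod n) l) (hl : l ≠ 0)
    (hxm : x ≡ g [MOD m]) (hxn : x ≡ 1 [MOD n]) (e i : ℕ) :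
    whitemanClass m n g x e i ⊆ (range (m * n)).filter (·.Coprime (m * n)) := by
  have hgm' := hgm.natCast_coprime hk
  have hgn' := hgn.natCast_coprime hl
  have hxm' : x.Coprime m := hxm.gcd_eq.trans hgm'
  have hxn' : x.Coprime n := hxn.gcd_eq.trans (Nat.coprime_one_left n)
  simp only [whitemanClass, subset_iff, mem_image, mem_filter, mem_range]
  rintro _ ⟨s, -, rfl⟩
  refine ⟨Nat.mod_lt _ hmn0, (ZMod.coprime_mod_iff_coprime _ _).mpr ?_⟩
  exact Nat.Coprime.mul_left
    (Nat.coprime_mul_iff_right.mpr ⟨hgm'.pow_left s, hgn'.pow_left s⟩)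
    (Nat.coprime_mul_iff_right.mpr ⟨hxm'.pow_left i, hxn'.pow_left i⟩)

end Whiteman

theorem card_filter_coprime_range_mul_of_prime {p q : ℕ} (hp : p.Prime) (hq : q.Prime) (hpq : p ≠ q) :
    ((range (p * q)).filter (·.Coprime (p * q))).card = (p - 1) * (q - 1) := by
  rw [← Nat.totient_prime hp, ← Nat.totient_prime hq,
    ← Nat.totient_mul ((Nat.coprime_primes hp hq).mpr hpq), Nat.totient_eq_card_coprime]
  simp only [Nat.coprime_comm]

theorem whiteman_classes_partition_units_general
    (p q : ℕ) (hp : p.Prime) (hq : q.Prime) (hpq : p ≠ q)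
    (hgcd : Nat.gcd (p - 1) (q - 1) = 2)
    (g : ℕ)
    (hgp : IsPrimitiveRoot (g : ZMod p) (p - 1))
    (hgq : IsPrimitiveRoot (g : ZMod q) (q - 1))
    (x : ℕ) (hxp : x % p = g % p) (hxq : x % q = 1)
    (e : ℕ) (he : e = (p - 1) * (q - 1) / 2)
    (D : ℕ → Finset ℕ)
    (hD : ∀ i, D i = (Finset.range e).image (fun s => g ^ s * x ^ i % (p * q))) :
    (Finset.range (p * q)).filter (fun a => Nat.Coprime a (p * q)) = D 0 ∪ D 1 ∧
      D 0 ∩ D 1 = ∅ ∧ (D 0).card = e ∧ (D 1).card = e := by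
  have hp2 := hp.two_le
  have hq2 := hq.two_le
  have hcop : p.Coprime q := (Nat.coprime_primes hp hq).mpr hpq
  have hxq' : x ≡ 1 [MOD q] := hxq.trans (Nat.mod_eq_of_lt (by omega)).symm
  have htwo_lcm : 2 * (p - 1).lcm (q - 1) = (p - 1) * (q - 1) := hgcd ▸ Nat.gcd_mul_lcm _ _
  have hlcm : (p - 1).lcm (q - 1) = e := by omega
  obtain rfl : D = whitemanClass p q g x ((p - 1).lcm (q - 1)) := funext (hlcm ▸ hD)
  have hcard := card_whitemanClass hcop hgp (by omega) hgq (by omega) hxp hxq'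
  have hdisj := disjoint_whitemanClass hcop hgp (by omega) hgq (by omega) hxp hxq'
    (hgcd ▸ Nat.gcd_dvd_left _ _) (hgcd ▸ Nat.gcd_dvd_right _ _) ((p - 1).lcm (q - 1))
  have hsub i := whitemanClass_subset_coprime (by positivity) hgp (by omega) hgq (by omega)
    hxp hxq' ((p - 1).lcm (q - 1)) i
  refine ⟨(eq_of_subset_of_card_le (union_subset (hsub 0) (hsub 1)) ?_).symm,
    disjoint_iff_inter_eq_empty.mp hdisj, hlcm ▸ hcard 0, hlcm ▸ hcard 1⟩
  rw [card_filter_coprime_range_mul_of_prime hp hq hpq, card_union_of_disjoint hdisj, hcard, hcard]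
  omega

/-- The Whiteman generalized cyclotomic classes of order 2 partition the units
modulo `N = p*q`: `Z_N^* = D_0 ∪ D_1`, `D_0 ∩ D_1 = ∅`, and each class has
exactly `e = (p-1)*(q-1)/2` elements. -/
theorem whiteman_classes_partition_units
    (p q : ℕ) (hp : p.Prime) (hq : q.Prime) (hpq : p ≠ q)
    (hpo : Odd p) (hqo : Odd q)
    (hgcd : Nat.gcd (p - 1) (q - 1) = 2)
    (g : ℕ)
    (hgp : IsPrimitiveRoot (g : ZMod p) (p - 1))
    (hgq : IsPrimitiveRoot (g : ZMod q) (q - 1))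
    (x : ℕ) (hxlt : x < p * q) (hxp : x % p = g % p) (hxq : x % q = 1)
    (e : ℕ) (he : e = (p - 1) * (q - 1) / 2)
    (D : ℕ → Finset ℕ)
    (hD : ∀ i, D i = (Finset.range e).image (fun s => g ^ s * x ^ i % (p * q))) :
    (Finset.range (p * q)).filter (fun a => Nat.Coprime a (p * q)) = D 0 ∪ D 1 ∧
      D 0 ∩ D 1 = ∅ ∧ (D 0).card = e ∧ (D 1).card = e :=
  whiteman_classes_partition_units_general p q hp hq hpq hgcd g hgp hgq x hxp hxq e he D hD
end

section
/- Assume in addition p ≡ 1 (mod 4) and q ≡ 3 (mod 4). Then there exists ε ∈ {1, −1} such that η_0²(δ_1^{(p)}δ_1^{(q)} + δ_0^{(p)}δ_0^{(q)}) + η_1²(δ_1^{(p)}δ_0^{(q)} + δ_0^{(p)}δ_1^{(q)}) = (1 − pq)/4 + ε·pq/2. -/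
/-!
All four sums `η₀ ± η₁`, `δ₀ ± δ₁` are sums over a group of units split into the two cosets of an
index-two subgroup: `(ZMod p)ˣ` into squares and non-squares, and
`(ZMod pq)ˣ ≅ (ZMod p)ˣ × (ZMod q)ˣ` into `⟨(g, g)⟩` and `(g, 1)⟨(g, g)⟩`, which has index two
because `gcd (p - 1) (q - 1) = 2`. Hence the sums are sums of an additive character over all
units: `δ₀ + δ₁ = -1`, and `η₀ + η₁ = (-1)(-1) = 1` after splitting the additive character of
`ZMod pq` along the Chinese remainder theorem. The differences are quadratic Gauss sums, so
`(δ₀ - δ₁)² = χ₄(p) p` and `(η₀ - η₁)² = χ₄(p) χ₄(q) pq`. For `p ≡ 1`, `q ≡ 3 (mod 4)` both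
`(η₀ - η₁)²` and `((δ₀ᵖ - δ₁ᵖ)(δ₀ᑫ - δ₁ᑫ))²` equal `-pq`, so their product is `±pq`, and the
claimed identity is linear algebra in these sums and differences.
-/

open Finset ZMod

section IndexTwo

variable {G : Type*} [CommGroup G] {g x : G}

theorem pow_mul_injOn_range_orderOf (g y : G) :
    Set.InjOn (fun s ↦ g ^ s * y) (range (orderOf g)) :=
  (mul_left_injective y).comp_injOn (by simpa only [coe_range] using pow_injOn_Iio_orderOf)

variable [Fintype G]

theorem sum_eq_sum_pow_add_sum_pow_mul {M : Type*} [AddCommMonoid M]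
    (hx : x ∉ Subgroup.zpowers g) (hcard : Fintype.card G = 2 * orderOf g) (F : G → M) :
    ∑ u, F u = ∑ s ∈ range (orderOf g), F (g ^ s) + ∑ s ∈ range (orderOf g), F (g ^ s * x) := by
  classical
  have hinj : Set.InjOn (g ^ ·) (range (orderOf g)) := by
    simpa only [coe_range] using pow_injOn_Iio_orderOf
  have hinj' := pow_mul_injOn_range_orderOf g x
  have hdisj : Disjoint ((range (orderOf g)).image (g ^ ·))
      ((range (orderOf g)).image (fun s ↦ g ^ s * x)) := by
    simp only [disjoint_left, mem_image]
    rintro _ ⟨s, -, rfl⟩ ⟨t, -, hts⟩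
    refine hx ⟨s - t, ?_⟩
    simp only [zpow_sub, zpow_natCast, ← hts]
    exact mul_inv_cancel_comm _ _
  have hunion : (range (orderOf g)).image (g ^ ·) ∪ (range (orderOf g)).image (g ^ · * x)
      = univ := by
    refine eq_univ_of_card _ ?_
    rw [card_union_of_disjoint hdisj, card_image_of_injOn hinj, card_image_of_injOn hinj',
      card_range, hcard, two_mul]
  rw [← sum_image hinj, ← sum_image hinj', ← sum_union hdisj, hunion]

end IndexTwo

section Parity

variable {G H : Type*} [Group G] [Group H]

theorem notMem_zpowers_sq {x : G} (h : Even (orderOf x)) : x ∉ Subgroup.zpowers (x ^ 2) := by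
  rintro ⟨k, hk : (x ^ 2) ^ k = x⟩
  have h1 : x ^ (2 * k - 1) = 1 := by
    rw [zpow_sub_one, zpow_mul, zpow_ofNat, hk, mul_inv_cancel]
  have := (Int.natCast_dvd_natCast.mpr h.two_dvd).trans (orderOf_dvd_iff_zpow_eq_one.mpr h1)
  omega

theorem mk_one_notMem_zpowers {a : G} {b : H}
    (ha : Even (orderOf a)) (hb : Even (orderOf b)) : (a, (1 : H)) ∉ Subgroup.zpowers (a, b) := by
  rintro ⟨k, hk : (a, b) ^ k = (a, 1)⟩
  have hka : a ^ k = a := congrArg Prod.fst hk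
  have hkb : b ^ k = 1 := congrArg Prod.snd hk
  have h1 := (Int.natCast_dvd_natCast.mpr hb.two_dvd).trans (orderOf_dvd_iff_zpow_eq_one.mpr hkb)
  have h2 := (Int.natCast_dvd_natCast.mpr ha.two_dvd).trans
    (orderOf_dvd_iff_zpow_eq_one.mpr (by rw [zpow_sub_one, hka, mul_inv_cancel] : a ^ (k - 1) = 1))
  omega

end Parity

theorem IsPrimitiveRoot.exists_unit_eq_orderOf_eq {M : Type*} [CommMonoid M] {a : M} {k : ℕ}
    (h : IsPrimitiveRoot a k) (hk : k ≠ 0) : ∃ u : Mˣ, (u : M) = a ∧ orderOf u = k :=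
  ⟨_, (h.isUnit hk).unit_spec, (h.isUnit_unit hk).eq_orderOf.symm⟩

theorem sum_units_eq_sum_sub {G₀ M : Type*} [GroupWithZero G₀] [Fintype G₀] [DecidableEq G₀]
    [AddCommGroup M] (f : G₀ → M) : ∑ u : G₀ˣ, f u = ∑ a, f a - f 0 := by
  calc ∑ u : G₀ˣ, f u = ∑ a : {a : G₀ // a ≠ 0}, f a :=
        Fintype.sum_equiv unitsEquivNeZero _ _ fun _ ↦ rfl
    _ = ∑ a ∈ univ.erase 0, f a := (sum_subtype _ (by simp) f).symm
    _ = ∑ a, f a - f 0 := by rw [eq_sub_iff_add_eq, sum_erase_add _ _ (mem_univ _)]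

section FiniteField

variable {F : Type*} [Field F] [Fintype F] [DecidableEq F]

theorem AddChar.sum_units_eq_neg_one {R : Type*} [CommRing R] [IsDomain R] {ψ : AddChar F R}
    (hψ : ψ ≠ 1) : ∑ u : Fˣ, ψ u = -1 := by
  rw [sum_units_eq_sum_sub, AddChar.sum_eq_zero_of_ne_one hψ, AddChar.map_zero_eq_one, zero_sub]

theorem sum_units_mul_eq_gaussSum {R : Type*} [CommRing R] (χ : MulChar F R) (ψ : AddChar F R) :
    ∑ u : Fˣ, χ u * ψ u = gaussSum χ ψ := by
  rw [sum_units_eq_sum_sub (fun a ↦ χ a * ψ a), MulChar.map_zero, zero_mul, sub_zero, gaussSum]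

variable (F) in
noncomputable def complexQuadraticChar : MulChar F ℂ :=
  (quadraticChar F).ringHomComp (Int.castRingHom ℂ)

theorem gaussSum_complexQuadraticChar_sq (hF : ringChar F ≠ 2) {ψ : AddChar F ℂ} (hψ : ψ ≠ 1) :
    gaussSum (complexQuadraticChar F) ψ ^ 2 = ZMod.χ₄ (Fintype.card F) * Fintype.card F := by
  rw [complexQuadraticChar, gaussSum_sq ((MulChar.ringHomComp_ne_one_iff Int.cast_injective).mpr
      (quadraticChar_ne_one hF)) ((quadraticChar_isQuadratic F).comp _)
      (AddChar.IsPrimitive.of_ne_one hψ), MulChar.ringHomComp_apply,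
    quadraticChar_neg_one hF, eq_intCast]

theorem IsPrimitiveRoot.complexQuadraticChar_eq_neg_one (hF : ringChar F ≠ 2) {g : F}
    (hg : IsPrimitiveRoot g (Fintype.card F - 1)) : complexQuadraticChar F g = -1 := by
  have hodd := FiniteField.odd_card_of_char_ne_two hF
  have hcard := Fintype.one_lt_card (α := F)
  have hsq : ¬ IsSquare g := by
    rw [FiniteField.isSquare_iff hF (hg.ne_zero (by omega))]
    exact hg.pow_ne_one_of_pos_of_lt (by omega) (by omega)
  rw [complexQuadraticChar, MulChar.ringHomComp_apply,
    quadraticChar_neg_one_iff_not_isSquare.mpr hsq]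
  simp

end FiniteField

theorem sum_image_mod_exp_pow {n : ℕ} [NeZero n] {S : Finset ℕ} {f : ℕ → ℕ}
    (hf : Set.InjOn (fun t ↦ (f t : ZMod n)) S) :
    ∑ k ∈ S.image (fun t ↦ f t % n), Complex.exp (2 * Real.pi * Complex.I / n) ^ k =
      ∑ t ∈ S, stdAddChar (f t : ZMod n) := by
  rw [sum_image fun s hs t ht hst ↦ hf hs ht (by simpa using congrArg (Nat.cast : ℕ → ZMod n) hst)]
  refine sum_congr rfl fun t _ ↦ ?_
  have hcast : (f t : ZMod n) = ((f t % n : ℕ) : ℤ) := by simp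
  rw [hcast, stdAddChar_coe, ← Complex.exp_nat_mul, Int.cast_natCast]
  ring_nf

theorem stdAddChar_ne_one {n : ℕ} [NeZero n] [Nontrivial (ZMod n)] :
    (stdAddChar : AddChar (ZMod n) ℂ) ≠ 1 := fun h ↦
  one_ne_zero <| injective_stdAddChar <| by rw [h, AddChar.one_apply, AddChar.map_zero_eq_one]

theorem exists_stdAddChar_eq_mul {m n : ℕ} (h : m.Coprime n) [Fact (1 < m)] [Fact (1 < n)] :
    ∃ (ψ₁ : AddChar (ZMod m) ℂ) (ψ₂ : AddChar (ZMod n) ℂ),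
      ψ₁ ≠ 1 ∧ ψ₂ ≠ 1 ∧ ∀ k : ℕ, stdAddChar (k : ZMod (m * n)) = ψ₁ k * ψ₂ k := by
  set e := chineseRemainder h
  set Ψ : AddChar (ZMod m × ZMod n) ℂ := stdAddChar.compAddMonoidHom e.symm.toAddMonoidHom
  have hΨ : ∀ a, Ψ a = 1 → a = 0 := fun a ha ↦ by
    rw [← e.symm.map_eq_zero_iff, ← injective_stdAddChar.eq_iff, AddChar.map_zero_eq_one]
    exact ha
  refine ⟨Ψ.compAddMonoidHom (AddMonoidHom.inl _ _), Ψ.compAddMonoidHom (AddMonoidHom.inr _ _),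
    fun h1 ↦ ?_, fun h1 ↦ ?_, fun k ↦ ?_⟩
  · exact one_ne_zero (congrArg Prod.fst (hΨ (1, 0) (DFunLike.congr_fun h1 1)))
  · exact one_ne_zero (congrArg Prod.snd (hΨ (0, 1) (DFunLike.congr_fun h1 1)))
  · calc stdAddChar (k : ZMod (m * n)) = Ψ (e k) := by simp [Ψ]
      _ = Ψ (((k : ZMod m), (0 : ZMod n)) + (0, (k : ZMod n))) := by
        rw [map_natCast]; congr 1; ext <;> simp
      _ = _ := AddChar.map_add_eq_mul _ _ _

noncomputable def quadraticPeriod (p g i : ℕ) : ℂ :=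
  ∑ k ∈ (range ((p - 1) / 2)).image (fun t ↦ g ^ (2 * t + i) % p),
    Complex.exp (2 * Real.pi * Complex.I / p) ^ k

theorem quadraticPeriod_eq_sum {p : ℕ} [Fact p.Prime] {g : ℕ} {u : (ZMod p)ˣ}
    (hu : (u : ZMod p) = g) (hsq : orderOf (u ^ 2) = (p - 1) / 2) (i : ℕ) :
    quadraticPeriod p g i =
      ∑ t ∈ range (orderOf (u ^ 2)), stdAddChar (((u ^ 2) ^ t * u ^ i : (ZMod p)ˣ) : ZMod p) := by
  have hcast : Set.EqOn (fun t ↦ (((u ^ 2) ^ t * u ^ i : (ZMod p)ˣ) : ZMod p))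
      (fun t ↦ ((g ^ (2 * t + i) : ℕ) : ZMod p)) (range (orderOf (u ^ 2))) := fun t _ ↦ by
    simp [hu, pow_add, pow_mul]
  rw [quadraticPeriod, ← hsq, sum_image_mod_exp_pow ((Units.val_injective.comp_injOn
    (pow_mul_injOn_range_orderOf _ _)).congr hcast)]
  exact sum_congr rfl fun t ht ↦ congrArg stdAddChar (hcast ht).symm

theorem sum_units_mul_stdAddChar_eq_quadraticPeriod {p : ℕ} [Fact p.Prime] {g : ℕ}
    (hp2 : p ≠ 2) (hg : IsPrimitiveRoot (g : ZMod p) (p - 1)) (χ : MulChar (ZMod p) ℂ)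
    (hχ : χ g ^ 2 = 1) :
    ∑ v : (ZMod p)ˣ, χ v * stdAddChar (v : ZMod p) =
      quadraticPeriod p g 0 + χ g * quadraticPeriod p g 1 := by
  have hp := (Fact.out : p.Prime)
  obtain ⟨u, hu, hgen⟩ := hg.exists_unit_eq_orderOf_eq (Nat.sub_ne_zero_of_lt hp.one_lt)
  have heven : Even (orderOf u) := hgen ▸ hp.even_sub_one hp2
  have hsq : orderOf (u ^ 2) = (p - 1) / 2 := by
    rw [orderOf_pow_of_dvd two_ne_zero heven.two_dvd, hgen]
  have hcard : Fintype.card (ZMod p)ˣ = 2 * orderOf (u ^ 2) := by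
    rw [hsq, ZMod.card_units, Nat.mul_div_cancel' (hgen ▸ heven.two_dvd)]
  rw [sum_eq_sum_pow_add_sum_pow_mul (notMem_zpowers_sq heven) hcard,
    quadraticPeriod_eq_sum hu hsq, quadraticPeriod_eq_sum hu hsq, mul_sum, ← hu]
  rw [← hu] at hχ
  congr 1 <;> refine sum_congr rfl fun t _ ↦ ?_ <;>
    simp only [Units.val_mul, Units.val_pow_eq_pow_val, map_mul, map_pow, hχ, one_pow, one_mul,
      pow_zero, pow_one, mul_one]

theorem quadraticPeriod_zero_add_one {p : ℕ} [Fact p.Prime] {g : ℕ} (hp2 : p ≠ 2)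
    (hg : IsPrimitiveRoot (g : ZMod p) (p - 1)) :
    quadraticPeriod p g 0 + quadraticPeriod p g 1 = -1 := by
  have hg1 := MulChar.one_apply (R' := ℂ)
    (hg.isUnit (Nat.sub_ne_zero_of_lt (Fact.out : p.Prime).one_lt))
  have h := sum_units_mul_stdAddChar_eq_quadraticPeriod hp2 hg 1 (by rw [hg1, one_pow])
  simp only [MulChar.one_apply_coe, one_mul, hg1] at h
  rw [← h, AddChar.sum_units_eq_neg_one stdAddChar_ne_one]

theorem quadraticPeriod_sub_sq {p : ℕ} [Fact p.Prime] {g : ℕ} (hp2 : p ≠ 2)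
    (hg : IsPrimitiveRoot (g : ZMod p) (p - 1)) :
    (quadraticPeriod p g 0 - quadraticPeriod p g 1) ^ 2 = χ₄ p * p := by
  have hchar : ringChar (ZMod p) ≠ 2 := by rwa [ringChar_zmod_n]
  have hχ := IsPrimitiveRoot.complexQuadraticChar_eq_neg_one hchar (by rwa [ZMod.card])
  have h := sum_units_mul_stdAddChar_eq_quadraticPeriod hp2 hg _ (by rw [hχ]; norm_num)
  rw [hχ, sum_units_mul_eq_gaussSum] at h
  rw [sub_eq_add_neg, ← neg_one_mul, ← h, gaussSum_complexQuadraticChar_sq hchar stdAddChar_ne_one,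
    ZMod.card]

noncomputable def whitemanPeriod (p q g x i : ℕ) : ℂ :=
  ∑ k ∈ (range ((p - 1) * (q - 1) / 2)).image (fun s ↦ g ^ s * x ^ i % (p * q)),
    Complex.exp (2 * Real.pi * Complex.I / (p * q)) ^ k

theorem whitemanPeriod_eq_sum {p q : ℕ} [Fact p.Prime] [Fact q.Prime] (hpq : p ≠ q) {g x : ℕ}
    {up : (ZMod p)ˣ} {uq : (ZMod q)ˣ} (hup : (up : ZMod p) = g) (huq : (uq : ZMod q) = g)
    (hxp : (x : ZMod p) = g) (hxq : (x : ZMod q) = 1)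
    (hw : orderOf (up, uq) = (p - 1) * (q - 1) / 2)
    {ψ₁ : AddChar (ZMod p) ℂ} {ψ₂ : AddChar (ZMod q) ℂ}
    (hψ : ∀ k : ℕ, stdAddChar (k : ZMod (p * q)) = ψ₁ k * ψ₂ k) (i : ℕ) :
    whitemanPeriod p q g x i = ∑ s ∈ range (orderOf (up, uq)),
      ψ₁ (((up, uq) ^ s * (up, 1) ^ i).1 : ZMod p) *
        ψ₂ (((up, uq) ^ s * (up, 1) ^ i).2 : ZMod q) := by
  have hcast : Set.EqOn (fun s ↦
      ((((up, uq) ^ s * (up, 1) ^ i).1 : ZMod p), (((up, uq) ^ s * (up, 1) ^ i).2 : ZMod q)))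
      (fun s ↦ (((g ^ s * x ^ i : ℕ) : ZMod p), ((g ^ s * x ^ i : ℕ) : ZMod q)))
      (range (orderOf (up, uq))) := fun s _ ↦ by
    simp only [Prod.pow_mk, Prod.mk_mul_mk, one_pow, mul_one, Units.val_mul,
      Units.val_pow_eq_pow_val, Nat.cast_mul, Nat.cast_pow, hup, huq, hxp, hxq]
  have hinj : Set.InjOn (fun s ↦ ((g ^ s * x ^ i : ℕ) : ZMod (p * q)))
      (range (orderOf (up, uq))) := by
    refine Set.InjOn.of_comp (g := chineseRemainder
      ((Nat.coprime_primes Fact.out Fact.out).mpr hpq)) ?_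
    refine (((Units.val_injective.prodMap Units.val_injective).comp_injOn
      (pow_mul_injOn_range_orderOf _ _)).congr hcast).congr fun s _ ↦ ?_
    simp only [Function.comp_apply, map_natCast]
    rfl
  rw [whitemanPeriod, ← hw, ← Nat.cast_mul, sum_image_mod_exp_pow hinj]
  refine sum_congr rfl fun s hs ↦ ?_
  have h := hcast hs
  simp only [Prod.mk.injEq] at h
  rw [hψ, h.1, h.2]

theorem prod_mul_sum_units_eq_whitemanPeriod {p q : ℕ} [Fact p.Prime] [Fact q.Prime]
    (hpq : p ≠ q) (hgcd : Nat.gcd (p - 1) (q - 1) = 2) {g x : ℕ}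
    (hgp : IsPrimitiveRoot (g : ZMod p) (p - 1)) (hgq : IsPrimitiveRoot (g : ZMod q) (q - 1))
    (hxp : (x : ZMod p) = g) (hxq : (x : ZMod q) = 1)
    {ψ₁ : AddChar (ZMod p) ℂ} {ψ₂ : AddChar (ZMod q) ℂ}
    (hψ : ∀ k : ℕ, stdAddChar (k : ZMod (p * q)) = ψ₁ k * ψ₂ k)
    (χ₁ : MulChar (ZMod p) ℂ) (χ₂ : MulChar (ZMod q) ℂ) (hχ : χ₁ g * χ₂ g = 1) :
    (∑ a : (ZMod p)ˣ, χ₁ a * ψ₁ a) * (∑ b : (ZMod q)ˣ, χ₂ b * ψ₂ b) =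
      whitemanPeriod p q g x 0 + χ₁ g * whitemanPeriod p q g x 1 := by
  obtain ⟨up, hup, hop⟩ :=
    hgp.exists_unit_eq_orderOf_eq (Nat.sub_ne_zero_of_lt (Fact.out : p.Prime).one_lt)
  obtain ⟨uq, huq, hoq⟩ :=
    hgq.exists_unit_eq_orderOf_eq (Nat.sub_ne_zero_of_lt (Fact.out : q.Prime).one_lt)
  have hevenp : Even (p - 1) := even_iff_two_dvd.mpr (hgcd ▸ Nat.gcd_dvd_left _ _)
  have hevenq : Even (q - 1) := even_iff_two_dvd.mpr (hgcd ▸ Nat.gcd_dvd_right _ _)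
  have hw : orderOf (up, uq) = (p - 1) * (q - 1) / 2 := by
    rw [Prod.orderOf_mk, hop, hoq, Nat.lcm, hgcd]
  have hcard : Fintype.card ((ZMod p)ˣ × (ZMod q)ˣ) = 2 * orderOf (up, uq) := by
    rw [hw, Fintype.card_prod, ZMod.card_units, ZMod.card_units,
      Nat.mul_div_cancel' (dvd_mul_of_dvd_left hevenp.two_dvd _)]
  have hy : (up, (1 : (ZMod q)ˣ)) ∉ Subgroup.zpowers (up, uq) :=
    mk_one_notMem_zpowers (hop ▸ hevenp) (hoq ▸ hevenq)
  rw [Fintype.sum_mul_sum,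
    ← Fintype.sum_prod_type' (fun (a : (ZMod p)ˣ) (b : (ZMod q)ˣ) ↦ χ₁ a * ψ₁ a * (χ₂ b * ψ₂ b)),
    sum_eq_sum_pow_add_sum_pow_mul hy hcard, whitemanPeriod_eq_sum hpq hup huq hxp hxq hw hψ,
    whitemanPeriod_eq_sum hpq hup huq hxp hxq hw hψ, mul_sum, ← hup]
  rw [← hup, ← huq] at hχ
  congr 1 <;> refine sum_congr rfl fun s _ ↦ ?_ <;>
    simp only [Prod.pow_mk, Prod.mk_mul_mk, mul_one, pow_zero, pow_one,
      Units.val_mul, Units.val_pow_eq_pow_val, map_mul, map_pow]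
  · linear_combination (ψ₁ (↑up ^ s) * ψ₂ (↑uq ^ s)) * congrArg (· ^ s) hχ
  · linear_combination (χ₁ ↑up * ψ₁ (↑up ^ s * ↑up) * ψ₂ (↑uq ^ s)) * congrArg (· ^ s) hχ

theorem whitemanPeriod_zero_add_one {p q : ℕ} [Fact p.Prime] [Fact q.Prime]
    (hpq : p ≠ q) (hgcd : Nat.gcd (p - 1) (q - 1) = 2) {g x : ℕ}
    (hgp : IsPrimitiveRoot (g : ZMod p) (p - 1)) (hgq : IsPrimitiveRoot (g : ZMod q) (q - 1))
    (hxp : (x : ZMod p) = g) (hxq : (x : ZMod q) = 1) :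
    whitemanPeriod p q g x 0 + whitemanPeriod p q g x 1 = 1 := by
  obtain ⟨ψ₁, ψ₂, hψ₁, hψ₂, hψ⟩ :=
    exists_stdAddChar_eq_mul ((Nat.coprime_primes Fact.out Fact.out).mpr hpq)
  have hg1 := MulChar.one_apply (R' := ℂ)
    (hgp.isUnit (Nat.sub_ne_zero_of_lt (Fact.out : p.Prime).one_lt))
  have hg2 := MulChar.one_apply (R' := ℂ)
    (hgq.isUnit (Nat.sub_ne_zero_of_lt (Fact.out : q.Prime).one_lt))
  have h := prod_mul_sum_units_eq_whitemanPeriod hpq hgcd hgp hgq hxp hxq hψ 1 1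
    (by rw [hg1, hg2, one_mul])
  simp only [MulChar.one_apply_coe, one_mul, hg1] at h
  rw [← h, AddChar.sum_units_eq_neg_one hψ₁, AddChar.sum_units_eq_neg_one hψ₂, neg_one_mul, neg_neg]

theorem whitemanPeriod_sub_sq {p q : ℕ} [Fact p.Prime] [Fact q.Prime]
    (hpq : p ≠ q) (hgcd : Nat.gcd (p - 1) (q - 1) = 2) {g x : ℕ}
    (hgp : IsPrimitiveRoot (g : ZMod p) (p - 1)) (hgq : IsPrimitiveRoot (g : ZMod q) (q - 1))
    (hxp : (x : ZMod p) = g) (hxq : (x : ZMod q) = 1) :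
    (whitemanPeriod p q g x 0 - whitemanPeriod p q g x 1) ^ 2 = χ₄ p * χ₄ q * (p * q) := by
  obtain ⟨ψ₁, ψ₂, hψ₁, hψ₂, hψ⟩ :=
    exists_stdAddChar_eq_mul ((Nat.coprime_primes Fact.out Fact.out).mpr hpq)
  have hcharp : ringChar (ZMod p) ≠ 2 := by rw [ringChar_zmod_n]; rintro rfl; simp at hgcd
  have hcharq : ringChar (ZMod q) ≠ 2 := by rw [ringChar_zmod_n]; rintro rfl; simp at hgcd
  have hχ₁ := IsPrimitiveRoot.complexQuadraticChar_eq_neg_one hcharp (by rwa [ZMod.card])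
  have hχ₂ := IsPrimitiveRoot.complexQuadraticChar_eq_neg_one hcharq (by rwa [ZMod.card])
  have h := prod_mul_sum_units_eq_whitemanPeriod hpq hgcd hgp hgq hxp hxq hψ _ _
    (by rw [hχ₁, hχ₂]; norm_num)
  rw [hχ₁, sum_units_mul_eq_gaussSum, sum_units_mul_eq_gaussSum] at h
  rw [sub_eq_add_neg, ← neg_one_mul, ← h, mul_pow, gaussSum_complexQuadraticChar_sq hcharp hψ₁,
    gaussSum_complexQuadraticChar_sq hcharq hψ₂, ZMod.card, ZMod.card]
  ring

theorem exists_sign_of_sum_and_sub_sq {η₀ η₁ a₀ a₁ b₀ b₁ N : ℂ} (hN : N ≠ 0)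
    (hη : η₀ + η₁ = 1) (ha : a₀ + a₁ = -1) (hb : b₀ + b₁ = -1) (hηsq : (η₀ - η₁) ^ 2 = -N)
    (habsq : ((a₀ - a₁) * (b₀ - b₁)) ^ 2 = -N) :
    ∃ ε : ℂ, (ε = 1 ∨ ε = -1) ∧
      η₀ ^ 2 * (a₁ * b₁ + a₀ * b₀) + η₁ ^ 2 * (a₁ * b₀ + a₀ * b₁) = (1 - N) / 4 + ε * N / 2 := by
  refine ⟨(η₀ - η₁) * ((a₀ - a₁) * (b₀ - b₁)) / N, sq_eq_one_iff.mp ?_, ?_⟩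
  · rw [div_pow, mul_pow, hηsq, habsq, neg_mul_neg, ← sq, div_self (pow_ne_zero 2 hN)]
  · rw [div_mul_cancel₀ _ hN]
    -- `η₀² A + η₁² B = (η₀² + η₁²)(A + B)/2 + (η₀² - η₁²)(A - B)/2` with `A + B = 1`,
    -- `A - B = (a₀ - a₁)(b₀ - b₁)`, `η₀² + η₁² = (1 - N)/2` and `η₀² - η₁² = η₀ - η₁`.
    linear_combination ((η₀ + η₁) ^ 2 + (η₀ - η₁) ^ 2) * (b₀ + b₁) / 4 * ha
      - ((η₀ + η₁) ^ 2 + (η₀ - η₁) ^ 2) / 4 * hb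
      + ((η₀ + η₁ + 1) / 4 + (η₀ - η₁) * ((a₀ - a₁) * (b₀ - b₁)) / 2) * hη + hηsq / 4

theorem eta_delta_combination_general
    (p q : ℕ) (hp : p.Prime) (hq : q.Prime) (hpq : p ≠ q)
    (hgcd : Nat.gcd (p - 1) (q - 1) = 2)
    (hp4 : p % 4 = 1) (hq4 : q % 4 = 3)
    (g : ℕ)
    (hgp : IsPrimitiveRoot (g : ZMod p) (p - 1))
    (hgq : IsPrimitiveRoot (g : ZMod q) (q - 1))
    (x : ℕ) (hxp : x % p = g % p) (hxq : x % q = 1)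
    (e : ℕ) (he : e = (p - 1) * (q - 1) / 2)
    (D : ℕ → Finset ℕ)
    (hD : ∀ i, D i = (Finset.range e).image (fun s => g ^ s * x ^ i % (p * q)))
    (ω : ℂ) (hω : ω = Complex.exp (2 * Real.pi * Complex.I / (p * q)))
    (η : ℕ → ℂ) (hη : ∀ i, η i = ∑ k ∈ D i, ω ^ k)
    (Dp : ℕ → Finset ℕ)
    (hDp : ∀ i, Dp i = (Finset.range ((p - 1) / 2)).image (fun t => g ^ (2 * t + i) % p))
    (Dq : ℕ → Finset ℕ)
    (hDq : ∀ i, Dq i = (Finset.range ((q - 1) / 2)).image (fun t => g ^ (2 * t + i) % q))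
    (ωp : ℂ) (hωp : ωp = Complex.exp (2 * Real.pi * Complex.I / p))
    (ωq : ℂ) (hωq : ωq = Complex.exp (2 * Real.pi * Complex.I / q))
    (δp : ℕ → ℂ) (hδp : ∀ i, δp i = ∑ k ∈ Dp i, ωp ^ k)
    (δq : ℕ → ℂ) (hδq : ∀ i, δq i = ∑ k ∈ Dq i, ωq ^ k) :
    ∃ ε : ℂ, (ε = 1 ∨ ε = -1) ∧
      η 0 ^ 2 * (δp 1 * δq 1 + δp 0 * δq 0) + η 1 ^ 2 * (δp 1 * δq 0 + δp 0 * δq 1) =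
        (1 - (p : ℂ) * q) / 4 + ε * ((p : ℂ) * q) / 2 := by
  have := Fact.mk hp
  have := Fact.mk hq
  have hp2 : p ≠ 2 := by omega
  have hq2 : q ≠ 2 := by omega
  have hxp' : (x : ZMod p) = g := (ZMod.natCast_eq_natCast_iff' x g p).mpr hxp
  have hxq' : (x : ZMod q) = 1 := by
    rw [← Nat.cast_one, ZMod.natCast_eq_natCast_iff', hxq, Nat.mod_eq_of_lt hq.one_lt]
  have hηW (i : ℕ) : η i = whitemanPeriod p q g x i := by rw [hη, hD, he, hω, whitemanPeriod]
  have hδP (i : ℕ) : δp i = quadraticPeriod p g i := by rw [hδp, hDp, hωp, quadraticPeriod]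
  have hδQ (i : ℕ) : δq i = quadraticPeriod q g i := by rw [hδq, hDq, hωq, quadraticPeriod]
  simp only [hηW, hδP, hδQ]
  refine exists_sign_of_sum_and_sub_sq (by simp [hp.ne_zero, hq.ne_zero])
    (whitemanPeriod_zero_add_one hpq hgcd hgp hgq hxp' hxq')
    (quadraticPeriod_zero_add_one hp2 hgp) (quadraticPeriod_zero_add_one hq2 hgq) ?_ ?_
  · rw [whitemanPeriod_sub_sq hpq hgcd hgp hgq hxp' hxq', χ₄_nat_one_mod_four hp4,
      χ₄_nat_three_mod_four hq4]
    push_cast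
    ring
  · rw [mul_pow, quadraticPeriod_sub_sq hp2 hgp, quadraticPeriod_sub_sq hq2 hgq,
      χ₄_nat_one_mod_four hp4, χ₄_nat_three_mod_four hq4]
    push_cast
    ring

/-- For `p ≡ 1 (mod 4)` and `q ≡ 3 (mod 4)`, there exists `ε ∈ {1, -1}` such that
`η₀²(δ₁⁽ᵖ⁾δ₁⁽ᑫ⁾ + δ₀⁽ᵖ⁾δ₀⁽ᑫ⁾) + η₁²(δ₁⁽ᵖ⁾δ₀⁽ᑫ⁾ + δ₀⁽ᵖ⁾δ₁⁽ᑫ⁾) = (1 - pq)/4 + ε·pq/2`. -/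
theorem eta_delta_combination
    (p q : ℕ) (hp : p.Prime) (hq : q.Prime) (hpq : p ≠ q)
    (hpo : Odd p) (hqo : Odd q)
    (hgcd : Nat.gcd (p - 1) (q - 1) = 2)
    (hp4 : p % 4 = 1) (hq4 : q % 4 = 3)
    (g : ℕ)
    (hgp : IsPrimitiveRoot (g : ZMod p) (p - 1))
    (hgq : IsPrimitiveRoot (g : ZMod q) (q - 1))
    (x : ℕ) (hxlt : x < p * q) (hxp : x % p = g % p) (hxq : x % q = 1)
    (e : ℕ) (he : e = (p - 1) * (q - 1) / 2)
    (D : ℕ → Finset ℕ)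
    (hD : ∀ i, D i = (Finset.range e).image (fun s => g ^ s * x ^ i % (p * q)))
    (ω : ℂ) (hω : ω = Complex.exp (2 * Real.pi * Complex.I / (p * q)))
    (η : ℕ → ℂ) (hη : ∀ i, η i = ∑ k ∈ D i, ω ^ k)
    (Dp : ℕ → Finset ℕ)
    (hDp : ∀ i, Dp i = (Finset.range ((p - 1) / 2)).image (fun t => g ^ (2 * t + i) % p))
    (Dq : ℕ → Finset ℕ)
    (hDq : ∀ i, Dq i = (Finset.range ((q - 1) / 2)).image (fun t => g ^ (2 * t + i) % q))
    (ωp : ℂ) (hωp : ωp = Complex.exp (2 * Real.pi * Complex.I / p))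
    (ωq : ℂ) (hωq : ωq = Complex.exp (2 * Real.pi * Complex.I / q))
    (δp : ℕ → ℂ) (hδp : ∀ i, δp i = ∑ k ∈ Dp i, ωp ^ k)
    (δq : ℕ → ℂ) (hδq : ∀ i, δq i = ∑ k ∈ Dq i, ωq ^ k) :
    ∃ ε : ℂ, (ε = 1 ∨ ε = -1) ∧
      η 0 ^ 2 * (δp 1 * δq 1 + δp 0 * δq 0) + η 1 ^ 2 * (δp 1 * δq 0 + δp 0 * δq 1) =
        (1 - (p : ℂ) * q) / 4 + ε * ((p : ℂ) * q) / 2 :=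
  eta_delta_combination_general p q hp hq hpq hgcd hp4 hq4 g hgp hgq x hxp hxq e he D hD ω hω η hη
    Dp hDp Dq hDq ωp hωp ωq hωq δp hδp δq hδq
end

section
/- Let s = (s_i) be any binary sequence of period N, S(x) = Σ_{i=0}^{N−1} s_i x^i ∈ ℤ[x], ω_N = e^{2πi/N}, and let A = (a_{i,j}) be the N×N matrix over ℚ with a_{i,j} = s_{(i−j) mod N}. Then (1) det(A) = ∏_{a=0}^{N−1} S(ω_N^a), and (2) if det(A) ≠ 0, then gcd(S(2), 2^N − 1) divides gcd(det(A), 2^N − 1). -/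
/-!
The row vector `(1, z, …, z^{N-1})` is a left eigenvector of the circulant matrix with first
column `v` for every `z` with `z ^ N = 1`, with eigenvalue `∑ₖ vₖ zᵏ`. Over `ℂ`, the `N` vectors
coming from the powers of `ω` form an invertible Vandermonde matrix, which diagonalises `A` and
gives (1). Over `ZMod d` with `d = gcd(S(2), 2^N - 1)` we have `2 ^ N = 1` and `S(2) = 0`, so the
vector of powers of `2` (whose first entry is `1`) lies in the left kernel of `A`; hence `d ∣ det A`,
which gives (2).
-/

open Matrix

namespace Matrix

variable {R : Type*} [CommRing R] {N : ℕ}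

lemma pow_val_add_of_pow_eq_one {z : R} (hz : z ^ N = 1) (a b : Fin N) :
    z ^ ((a + b : Fin N) : ℕ) = z ^ (a : ℕ) * z ^ (b : ℕ) := by
  rw [Fin.val_add, ← pow_eq_pow_mod _ hz, pow_add]

variable [NeZero N]

lemma vecMul_pow_circulant (v : Fin N → R) {z : R} (hz : z ^ N = 1) :
    (fun j : Fin N => z ^ (j : ℕ)) ᵥ* circulant v =
      (∑ k, v k * z ^ (k : ℕ)) • fun j : Fin N => z ^ (j : ℕ) := by
  funext j
  simp only [vecMul, dotProduct, circulant_apply, Pi.smul_apply, smul_eq_mul, Finset.sum_mul]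
  refine (Fintype.sum_equiv (Equiv.addRight j) _ _ fun k => ?_).symm
  rw [Equiv.coe_addRight, add_sub_cancel_right, pow_val_add_of_pow_eq_one hz]
  ring

lemma det_circulant_of_isPrimitiveRoot [IsDomain R] (v : Fin N → R) {ζ : R}
    (hζ : IsPrimitiveRoot ζ N) :
    det (circulant v) = ∏ a : Fin N, ∑ k : Fin N, v k * (ζ ^ (a : ℕ)) ^ (k : ℕ) := by
  set V := vandermonde fun a : Fin N => ζ ^ (a : ℕ)
  have hV : V * circulant v =
      diagonal (fun a : Fin N => ∑ k, v k * (ζ ^ (a : ℕ)) ^ (k : ℕ)) * V := by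
    ext a j
    have hz : (ζ ^ (a : ℕ)) ^ N = 1 := by
      rw [← pow_mul, mul_comm, pow_mul, hζ.pow_eq_one, one_pow]
    rw [diagonal_mul]
    simpa [V, mul_apply, vecMul, dotProduct] using congrFun (vecMul_pow_circulant v hz) j
  have hVdet : V.det ≠ 0 :=
    det_vandermonde_ne_zero_iff.mpr fun a b hab => Fin.ext (hζ.pow_inj a.isLt b.isLt hab)
  have := congrArg det hV
  rw [det_mul, det_mul, det_diagonal, mul_comm] at this
  exact mul_right_cancel₀ hVdet this

lemma det_circulant_eq_zero (v : Fin N → R) {z : R} (hz : z ^ N = 1)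
    (hv : ∑ k, v k * z ^ (k : ℕ) = 0) : det (circulant v) = 0 := by
  have hker : (circulant v)ᵀ *ᵥ (fun j : Fin N => z ^ (j : ℕ)) = 0 := by
    rw [mulVec_transpose, vecMul_pow_circulant v hz, hv, zero_smul]
  rw [← det_transpose]
  exact det_eq_zero_of_mulVec_eq_zero_of_mem_nonZeroDivisors hker (i := 0)
    (by simp [one_mem])

lemma dvd_det_circulant (v : Fin N → ℤ) {z : ℤ} {d : ℕ} (hz : (d : ℤ) ∣ z ^ N - 1)
    (hv : (d : ℤ) ∣ ∑ k, v k * z ^ (k : ℕ)) : (d : ℤ) ∣ det (circulant v) := by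
  rw [← ZMod.intCast_zmod_eq_zero_iff_dvd] at hz hv ⊢
  push_cast at hz hv
  rw [Int.cast_det, map_circulant]
  exact det_circulant_eq_zero _ (sub_eq_zero.mp hz) hv

end Matrix

theorem circulant_det_and_gcd_general
    (N : ℕ) (hN : 0 < N)
    (s : ℕ → ℕ)
    (ω : ℂ) (hω : ω = Complex.exp (2 * Real.pi * Complex.I / N))
    (A : Matrix (Fin N) (Fin N) ℤ)
    (hA : ∀ i j : Fin N, A i j = s (((i : ℕ) + (N - (j : ℕ))) % N)) :
    ((A.det : ℂ) = ∏ a ∈ Finset.range N, ∑ i ∈ Finset.range N, (s i : ℂ) * (ω ^ a) ^ i) ∧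
      (A.det ≠ 0 →
        Int.gcd (∑ i ∈ Finset.range N, (s i : ℤ) * 2 ^ i) (2 ^ N - 1) ∣
          Int.gcd A.det (2 ^ N - 1)) := by
  have : NeZero N := ⟨hN.ne'⟩
  obtain rfl : A = circulant fun k : Fin N => (s k : ℤ) := by
    ext i j
    rw [hA, circulant_apply, Fin.val_sub, add_comm]
  refine ⟨?_, fun _ => ?_⟩
  · have hω : IsPrimitiveRoot ω N := hω ▸ Complex.isPrimitiveRoot_exp N hN.ne'
    rw [Int.cast_det, map_circulant, det_circulant_of_isPrimitiveRoot _ hω]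
    rw [← Fin.prod_univ_eq_prod_range]
    congr! 1 with a
    exact Fin.sum_univ_eq_sum_range (fun i => (s i : ℂ) * (ω ^ (a : ℕ)) ^ i) N
  · set S₂ := ∑ i ∈ Finset.range N, (s i : ℤ) * 2 ^ i
    have hdet : (S₂.gcd (2 ^ N - 1) : ℤ) ∣ det (circulant fun k : Fin N => (s k : ℤ)) :=
      dvd_det_circulant _ (Int.gcd_dvd_right _ _)
        (by rw [Fin.sum_univ_eq_sum_range (fun i => (s i : ℤ) * 2 ^ i)]; exact Int.gcd_dvd_left _ _)
    exact_mod_cast Int.dvd_coe_gcd hdet (Int.gcd_dvd_right _ _)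

/-- For a binary sequence `s` of period `N` with circulant matrix `A`,
(1) `det A = ∏_{a<N} S(ω_N^a)` and (2) if `det A ≠ 0` then
`gcd(S(2), 2^N - 1)` divides `gcd(det A, 2^N - 1)`. -/
theorem circulant_det_and_gcd
    (N : ℕ) (hN : 0 < N)
    (s : ℕ → ℕ) (hs01 : ∀ i, s i = 0 ∨ s i = 1) (hper : ∀ i, s (i + N) = s i)
    (ω : ℂ) (hω : ω = Complex.exp (2 * Real.pi * Complex.I / N))
    (A : Matrix (Fin N) (Fin N) ℤ)
    (hA : ∀ i j : Fin N, A i j = s (((i : ℕ) + (N - (j : ℕ))) % N)) :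
    ((A.det : ℂ) = ∏ a ∈ Finset.range N, ∑ i ∈ Finset.range N, (s i : ℂ) * (ω ^ a) ^ i) ∧
      (A.det ≠ 0 →
        Int.gcd (∑ i ∈ Finset.range N, (s i : ℤ) * 2 ^ i) (2 ^ N - 1) ∣
          Int.gcd A.det (2 ^ N - 1)) :=
  circulant_det_and_gcd_general N hN s ω hω A hA
end

section
/- For every fixed a ∈ P and each i ∈ {0,1}, as b runs through D_i the product ab mod N runs through P hitting every element of P exactly (p−1)/2 times; that is, for every c ∈ P, the number of b ∈ D_i with ab ≡ c (mod N) equals (p−1)/2. Symmetrically, for every fixed a ∈ Q and every c ∈ Q, the number of b ∈ D_i with ab ≡ c (mod N) equals (q−1)/2. -/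
/-!
Write `b = g ^ s * x ^ i mod N`. By the Chinese remainder theorem the exponents `s < e` give
distinct `b`, because `e = lcm (p - 1) (q - 1)` when `gcd (p - 1) (q - 1) = 2`. For `a, c ∈ P`
both sides of `a * b ≡ c` vanish modulo `p`, so the congruence only constrains `b` modulo `q`,
where it reads `g ^ s = c / (a * x ^ i)`: this fixes `s` modulo `q - 1`, and exactly
`e / (q - 1) = (p - 1) / 2` exponents below `e` lie in that class. The case of `Q` is symmetric.
-/

open Finset

namespace IsPrimitiveRoot

theorem pow_eq_pow_iff_modEq {M : Type*} [CommMonoid M] {ζ : M} {k : ℕ}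
    (h : IsPrimitiveRoot ζ k) (hk : k ≠ 0) {s t : ℕ} :
    ζ ^ s = ζ ^ t ↔ s ≡ t [MOD k] := by
  rw [(h.isOfFinOrder hk).pow_inj_mod, ← h.eq_orderOf]
  rfl

theorem exists_forall_pow_eq_iff_modEq {R : Type*} [CommRing R] [IsDomain R] {ζ u : R} {k : ℕ}
    [NeZero k] (h : IsPrimitiveRoot ζ k) (hu : u ^ k = 1) :
    ∃ s₀, ∀ s, ζ ^ s = u ↔ s ≡ s₀ [MOD k] := by
  obtain ⟨s₀, -, rfl⟩ := h.eq_pow_of_pow_eq_one hu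
  exact ⟨s₀, fun _ => h.pow_eq_pow_iff_modEq (NeZero.ne k)⟩

end IsPrimitiveRoot

theorem card_filter_image_range_of_modEq {α : Type*} [DecidableEq α] {f : ℕ → α}
    {P : α → Prop} [DecidablePred P] {k t s₀ : ℕ} (hk : 0 < k)
    (hf : Set.InjOn f (range (k * t))) (hP : ∀ s, P (f s) ↔ s ≡ s₀ [MOD k]) :
    #{b ∈ (range (k * t)).image f | P b} = t := by
  rw [filter_image, card_image_of_injOn (hf.mono (coe_subset.2 (filter_subset _ _))),
    filter_congr (fun s _ => hP s), ← Nat.count_eq_card_filter_range, Nat.count_modEq_card _ hk]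
  simp [hk.ne']

theorem pow_mul_modEq_pow_mul_iff {m k g y s t : ℕ} (hg : IsPrimitiveRoot (g : ZMod m) k)
    (hk : k ≠ 0) (hy : IsUnit (y : ZMod m)) :
    g ^ s * y ≡ g ^ t * y [MOD m] ↔ s ≡ t [MOD k] := by
  rw [← ZMod.natCast_eq_natCast_iff, ← hg.pow_eq_pow_iff_modEq hk]
  push_cast
  exact hy.mul_left_inj

theorem injOn_pow_mul_mod {m n k l g y : ℕ} (hgm : IsPrimitiveRoot (g : ZMod m) k)
    (hgn : IsPrimitiveRoot (g : ZMod n) l) (hk : k ≠ 0) (hl : l ≠ 0)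
    (hym : IsUnit (y : ZMod m)) (hyn : IsUnit (y : ZMod n)) :
    Set.InjOn (fun s => g ^ s * y % (m * n)) (range (Nat.lcm k l)) := by
  intro s hs t ht hst
  have h : g ^ s * y ≡ g ^ t * y [MOD m * n] := hst
  have hlcm : s ≡ t [MOD Nat.lcm k l] := Nat.mod_lcm
    ((pow_mul_modEq_pow_mul_iff hgm hk hym).1 (h.of_mul_right n))
    ((pow_mul_modEq_pow_mul_iff hgn hl hyn).1 (h.of_mul_left m))
  exact hlcm.eq_of_lt_of_lt (mem_range.1 hs) (mem_range.1 ht)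

theorem mod_mul_eq_iff_natCast_eq_of_dvd {m n a c : ℕ} (hmn : m.Coprime n) (ha : m ∣ a)
    (hc : m ∣ c) (hcN : c < m * n) : a % (m * n) = c ↔ (a : ZMod n) = c := by
  have hmod : a ≡ c [MOD m * n] ↔ a % (m * n) = c := by
    rw [Nat.ModEq, Nat.mod_eq_of_lt hcN]
  rw [← hmod, ← Nat.modEq_and_modEq_iff_modEq_mul hmn, ZMod.natCast_eq_natCast_iff]
  exact and_iff_right ((Nat.modEq_zero_iff_dvd.2 ha).trans (Nat.modEq_zero_iff_dvd.2 hc).symm)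

theorem dvd_and_ne_zero_of_mem_image_mul_mod {m n a : ℕ} (hn : n.Prime) (hmn : m.Coprime n)
    (ha : a ∈ (Icc 1 (n - 1)).image (fun k => k * m % (m * n))) :
    m ∣ a ∧ (a : ZMod n) ≠ 0 ∧ a < m * n := by
  obtain ⟨k, hk, rfl⟩ := mem_image.1 ha
  obtain ⟨hk1, hkn⟩ := mem_Icc.1 hk
  have hm : m ≠ 0 := by
    rintro rfl
    exact hn.one_lt.ne' (Nat.coprime_zero_left n |>.1 hmn)
  refine ⟨(Nat.dvd_mod_iff (dvd_mul_right m n)).2 (dvd_mul_left m k), ?_,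
    Nat.mod_lt _ (Nat.mul_pos (Nat.pos_of_ne_zero hm) hn.pos)⟩
  rw [Ne, ZMod.natCast_eq_zero_iff, Nat.dvd_mod_iff (dvd_mul_left n m), hn.dvd_mul, not_or]
  exact ⟨fun h => by have := Nat.le_of_dvd hk1 h; omega,
    fun h => hn.one_lt.ne' (Nat.Coprime.eq_one_of_dvd hmn.symm h)⟩

theorem card_filter_mul_mod_eq {m n g y t a c : ℕ} (hn : n.Prime) (hmn : m.Coprime n)
    (hg : IsPrimitiveRoot (g : ZMod n) (n - 1)) (hy : (y : ZMod n) ≠ 0)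
    (hinj : Set.InjOn (fun s => g ^ s * y % (m * n)) (range ((n - 1) * t)))
    (ha : a ∈ (Icc 1 (n - 1)).image (fun k => k * m % (m * n)))
    (hc : c ∈ (Icc 1 (n - 1)).image (fun k => k * m % (m * n))) :
    #{b ∈ (range ((n - 1) * t)).image (fun s => g ^ s * y % (m * n)) |
      a * b % (m * n) = c} = t := by
  have : Fact n.Prime := ⟨hn⟩
  have : NeZero (n - 1) := ⟨(Nat.sub_pos_of_lt hn.one_lt).ne'⟩
  obtain ⟨hma, ha0, -⟩ := dvd_and_ne_zero_of_mem_image_mul_mod hn hmn ha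
  obtain ⟨hmc, hc0, hcN⟩ := dvd_and_ne_zero_of_mem_image_mul_mod hn hmn hc
  have hay : (a : ZMod n) * y ≠ 0 := mul_ne_zero ha0 hy
  obtain ⟨s₀, hs₀⟩ := hg.exists_forall_pow_eq_iff_modEq
    (ZMod.pow_card_sub_one_eq_one (mul_ne_zero hc0 (inv_ne_zero hay)))
  refine card_filter_image_range_of_modEq (s₀ := s₀) (NeZero.pos _) hinj fun s => ?_
  rw [Nat.mul_mod_mod, mod_mul_eq_iff_natCast_eq_of_dvd hmn (hma.mul_right _) hmc hcN, ← hs₀,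
    eq_mul_inv_iff_mul_eq₀ hay]
  push_cast
  rw [mul_left_comm]

theorem whiteman_multiplication_count_general
    (p q : ℕ) (hp : p.Prime) (hq : q.Prime) (hpq : p ≠ q)
    (hgcd : Nat.gcd (p - 1) (q - 1) = 2)
    (g : ℕ)
    (hgp : IsPrimitiveRoot (g : ZMod p) (p - 1))
    (hgq : IsPrimitiveRoot (g : ZMod q) (q - 1))
    (x : ℕ) (hxp : x % p = g % p) (hxq : x % q = 1)
    (e : ℕ) (he : e = (p - 1) * (q - 1) / 2)
    (D : ℕ → Finset ℕ)
    (hD : ∀ i, D i = (Finset.range e).image (fun s => g ^ s * x ^ i % (p * q)))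
    (P : Finset ℕ) (hP : P = (Finset.Icc 1 (q - 1)).image (fun k => k * p % (p * q)))
    (Q : Finset ℕ) (hQ : Q = (Finset.Icc 1 (p - 1)).image (fun k => k * q % (p * q))) :
    ∀ i < 2,
      (∀ a ∈ P, ∀ c ∈ P,
        ((D i).filter (fun b => a * b % (p * q) = c)).card = (p - 1) / 2) ∧
      (∀ a ∈ Q, ∀ c ∈ Q,
        ((D i).filter (fun b => a * b % (p * q) = c)).card = (q - 1) / 2) := by
  have : Fact p.Prime := ⟨hp⟩
  have : Fact q.Prime := ⟨hq⟩
  have hcop : p.Coprime q := (Nat.coprime_primes hp hq).2 hpq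
  have hp1 : p - 1 ≠ 0 := (Nat.sub_pos_of_lt hp.one_lt).ne'
  have hq1 : q - 1 ≠ 0 := (Nat.sub_pos_of_lt hq.one_lt).ne'
  have hxp' : (x : ZMod p) = g := by rw [← ZMod.natCast_mod, hxp, ZMod.natCast_mod]
  have hxq' : (x : ZMod q) = 1 := by rw [← ZMod.natCast_mod, hxq, Nat.cast_one]
  have he_lcm : e = Nat.lcm (p - 1) (q - 1) := by rw [he, ← hgcd]; rfl
  have heP : e = (q - 1) * ((p - 1) / 2) := by
    rw [he, mul_comm, Nat.mul_div_assoc _ (hgcd ▸ Nat.gcd_dvd_left _ _)]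
  have heQ : e = (p - 1) * ((q - 1) / 2) := by
    rw [he, Nat.mul_div_assoc _ (hgcd ▸ Nat.gcd_dvd_right _ _)]
  intro i _
  have hinj := he_lcm ▸ injOn_pow_mul_mod (y := x ^ i) hgp hgq hp1 hq1
    (by simpa [hxp'] using (hgp.isUnit hp1).pow i) (by simp [hxq'])
  rw [hD]
  refine ⟨fun a ha c hc => ?_, fun a ha c hc => ?_⟩
  · rw [hP] at ha hc
    rw [heP] at hinj ⊢
    exact card_filter_mul_mod_eq hq hcop hgq (by simp [hxq']) hinj ha hc
  · rw [hQ, mul_comm p q] at ha hc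
    rw [heQ, mul_comm p q] at hinj ⊢
    exact card_filter_mul_mod_eq hp hcop.symm hgp (by simp [hxp', (hgp.isUnit hp1).ne_zero])
      hinj ha hc

/-- For fixed `a ∈ P` and any `c ∈ P`, the number of `b ∈ D_i` with `ab ≡ c (mod N)`
equals `(p-1)/2`; symmetrically for `a, c ∈ Q` the count is `(q-1)/2`. -/
theorem whiteman_multiplication_count
    (p q : ℕ) (hp : p.Prime) (hq : q.Prime) (hpq : p ≠ q)
    (hpo : Odd p) (hqo : Odd q)
    (hgcd : Nat.gcd (p - 1) (q - 1) = 2)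
    (g : ℕ)
    (hgp : IsPrimitiveRoot (g : ZMod p) (p - 1))
    (hgq : IsPrimitiveRoot (g : ZMod q) (q - 1))
    (x : ℕ) (hxlt : x < p * q) (hxp : x % p = g % p) (hxq : x % q = 1)
    (e : ℕ) (he : e = (p - 1) * (q - 1) / 2)
    (D : ℕ → Finset ℕ)
    (hD : ∀ i, D i = (Finset.range e).image (fun s => g ^ s * x ^ i % (p * q)))
    (P : Finset ℕ) (hP : P = (Finset.Icc 1 (q - 1)).image (fun k => k * p % (p * q)))
    (Q : Finset ℕ) (hQ : Q = (Finset.Icc 1 (p - 1)).image (fun k => k * q % (p * q))) :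
    ∀ i < 2,
      (∀ a ∈ P, ∀ c ∈ P,
        ((D i).filter (fun b => a * b % (p * q) = c)).card = (p - 1) / 2) ∧
      (∀ a ∈ Q, ∀ c ∈ Q,
        ((D i).filter (fun b => a * b % (p * q) = c)).card = (q - 1) / 2) :=
  whiteman_multiplication_count_general p q hp hq hpq hgcd g hgp hgq x hxp hxq e he D hD P hP Q hQ
end

section
/- Let p and q be distinct primes and N = pq. Then gcd(2^p − 1, (2^N − 1)/(2^p − 1)) = gcd(2^p − 1, q). -/
/-- For distinct primes `p, q` and `N = pq`,
`gcd(2^p - 1, (2^N - 1)/(2^p - 1)) = gcd(2^p - 1, q)`. -/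
theorem gcd_mersenne_quotient
    (p q : ℕ) (hp : p.Prime) (hq : q.Prime) (hpq : p ≠ q) :
    Nat.gcd (2 ^ p - 1) ((2 ^ (p * q) - 1) / (2 ^ p - 1)) = Nat.gcd (2 ^ p - 1) q := by
  set a := 2 ^ p - 1 with ha
  have h1 : 1 ≤ 2 ^ p := Nat.one_le_two_pow
  have ha1 : a + 1 = 2 ^ p := by omega
  have hfac : 2 ^ (p * q) - 1 = a * ∑ i ∈ Finset.range q, (2 ^ p) ^ i := by
    have : ((2 : ℤ) ^ (p*q) - 1) = (a : ℤ) * ∑ i ∈ Finset.range q, ((2:ℤ) ^ p) ^ i := by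
      have := geom_sum_mul ((2:ℤ)^p) q
      rw [← pow_mul] at this
      push_cast [ha, h1]
      linarith [this]
    have h2 : 1 ≤ 2 ^ (p*q) := Nat.one_le_two_pow
    rw [ha]
    zify [h1, h2]
    simp only [ha] at this
    push_cast [h1] at this
    linarith [this]
  have hquot : (2 ^ (p * q) - 1) / a = ∑ i ∈ Finset.range q, (2 ^ p) ^ i := by
    have hapos : 0 < a := by
      have : 2 ≤ 2 ^ p := by
        calc 2 = 2^1 := rfl
        _ ≤ 2^p := Nat.pow_le_pow_right (by norm_num) hp.one_lt.le
      omega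
    rw [hfac, Nat.mul_div_cancel_left _ hapos]
  rw [hquot]
  have hmod : (∑ i ∈ Finset.range q, (2 ^ p) ^ i) ≡ q [MOD a] := by
    have key : ∀ n : ℕ, (∑ i ∈ Finset.range n, (2 ^ p) ^ i) ≡ n [MOD a] := by
      intro n
      induction n with
      | zero => simp [Nat.ModEq.refl]
      | succ n ih =>
          rw [Finset.sum_range_succ]
          have h2p : (2 ^ p : ℕ) ≡ 1 [MOD a] :=
            ((Nat.modEq_iff_dvd' h1).2 (ha ▸ dvd_refl a)).symm
          simpa using ih.add (h2p.pow n)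
    exact key q
  rw [Nat.gcd_comm a _, Nat.gcd_comm a q]
  exact hmod.gcd_eq
end

section
/- Let p and q be distinct primes with p < q and N = pq. Then gcd(2^q − 1, (2^N − 1)/(2^q − 1)) = 1. -/
/-- For distinct primes `p < q` and `N = pq`,
`gcd(2^q - 1, (2^N - 1)/(2^q - 1)) = 1`. -/
theorem gcd_mersenne_quotient_coprime
    (p q : ℕ) (hp : p.Prime) (hq : q.Prime) (hpq : p < q) :
    Nat.gcd (2 ^ q - 1) ((2 ^ (p * q) - 1) / (2 ^ q - 1)) = 1 := by
  set x : ℕ := 2 ^ q with hxdef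
  have hx1 : 1 ≤ x := Nat.one_le_two_pow
  have hM : 0 < x - 1 := by
    have : 2 ≤ x := by
      calc 2 = 2 ^ 1 := (pow_one 2).symm
      _ ≤ 2 ^ q := Nat.pow_le_pow_right (by norm_num) hq.one_lt.le
    omega
  -- quotient equals geometric sum
  have hgeom : (x - 1) * ∑ i ∈ Finset.range p, x ^ i = x ^ p - 1 := by
    have hxp : 1 ≤ x ^ p := Nat.one_le_pow _ _ (by omega)
    have : ((x : ℤ) - 1) * ∑ i ∈ Finset.range p, (x : ℤ) ^ i = (x : ℤ) ^ p - 1 :=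
      mul_geom_sum (x : ℤ) p
    have := this
    zify [hx1, hxp]
    push_cast at this ⊢
    linarith [this]
  have hquot : (2 ^ (p * q) - 1) / (x - 1) = ∑ i ∈ Finset.range p, x ^ i := by
    have hpm : 2 ^ (p * q) = x ^ p := by rw [hxdef, ← pow_mul, mul_comm]
    rw [hpm, ← hgeom, Nat.mul_div_cancel_left _ hM]
  rw [hquot]
  -- rewrite the sum as (multiple of x-1) + p
  have hsum : ∑ i ∈ Finset.range p, x ^ i = (∑ i ∈ Finset.range p, (x ^ i - 1)) + p := by
    have hterm : ∀ i ∈ Finset.range p, x ^ i = (x ^ i - 1) + 1 := by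
      intro i _
      have : 1 ≤ x ^ i := Nat.one_le_pow _ _ (by omega)
      omega
    rw [Finset.sum_congr rfl hterm, Finset.sum_add_distrib, Finset.sum_const,
      Finset.card_range, smul_eq_mul, mul_one]
  have hdvd : (x - 1) ∣ ∑ i ∈ Finset.range p, (x ^ i - 1) := by
    refine Finset.dvd_sum fun i _ => ?_
    simpa using Nat.sub_dvd_pow_sub_pow x 1 i
  obtain ⟨k, hk⟩ := hdvd
  rw [hsum, hk, add_comm, Nat.gcd_add_mul_left_right]
  -- now show gcd (x-1) p = 1, i.e. ¬ p ∣ x - 1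
  have hnd : ¬ p ∣ x - 1 := by
    intro hdp
    haveI : Fact p.Prime := ⟨hp⟩
    have h2q : (2 : ZMod p) ^ q = 1 := by
      have : (1 : ℕ) ≡ 2 ^ q [MOD p] := (Nat.modEq_iff_dvd' hx1).mpr hdp
      have := (ZMod.natCast_eq_natCast_iff _ _ _).mpr this
      push_cast at this
      exact this.symm
    have hord : orderOf (2 : ZMod p) ∣ q := orderOf_dvd_of_pow_eq_one h2q
    rcases (Nat.Prime.eq_one_or_self_of_dvd hq _ hord) with h1 | hqq
    · have : (2 : ZMod p) = 1 := orderOf_eq_one_iff.mp h1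
      have : (1 : ZMod p) = 0 := by linear_combination this
      exact one_ne_zero this
    · have hx2 : 2 ≤ x := by
        calc 2 = 2 ^ 1 := (pow_one 2).symm
        _ ≤ 2 ^ q := Nat.pow_le_pow_right (by norm_num) hq.one_lt.le
      have hpodd : p ≠ 2 := by
        intro h2
        subst h2
        have h2x : (2 : ℕ) ∣ x := dvd_pow_self 2 hq.pos.ne'
        obtain ⟨a, ha⟩ := h2x
        obtain ⟨b, hb⟩ := hdp
        omega
      have h2ne : (2 : ZMod p) ≠ 0 := by
        have hnd2 : ¬ (p : ℕ) ∣ 2 := fun h =>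
          hpodd ((Nat.prime_dvd_prime_iff_eq hp Nat.prime_two).mp h)
        intro h
        exact hnd2 ((ZMod.natCast_eq_zero_iff 2 p).mp (by exact_mod_cast h))
      have hcard : orderOf (2 : ZMod p) ∣ p - 1 := ZMod.orderOf_dvd_card_sub_one h2ne
      rw [hqq] at hcard
      have hple := hp.two_le
      have := Nat.le_of_dvd (by omega) hcard
      omega
  have : Nat.Coprime p (x - 1) := (Nat.Prime.coprime_iff_not_dvd hp).mpr hnd
  exact Nat.Coprime.gcd_eq_one this.symm
end

section
/- Let p ≡ 1 (mod 4) and q ≡ 3 (mod 4) be primes with (|q − p| + 1)² < pq. Then q does not divide 2^p − 1 and p does not divide 2^q − 1; equivalently, gcd(2^p − 1, q) = 1 and gcd(2^q − 1, p) = 1. -/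
lemma aux_order_dvd (a b : ℕ) (ha : a.Prime) (hb : b.Prime) (hb3 : 3 ≤ b)
    (hdvd : b ∣ 2 ^ a - 1) : a ∣ b - 1 ∧ (2 : ZMod b) ^ a = 1 := by
  haveI := Fact.mk hb
  have h1 : (1 : ℕ) ≤ 2 ^ a := Nat.one_le_two_pow
  have h0 : ((2 ^ a - 1 : ℕ) : ZMod b) = 0 := (ZMod.natCast_eq_zero_iff _ _).mpr hdvd
  have hpow : (2 : ZMod b) ^ a = 1 := by
    rw [Nat.cast_sub h1] at h0
    push_cast at h0
    linear_combination h0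
  have hord : orderOf (2 : ZMod b) ∣ a := orderOf_dvd_of_pow_eq_one hpow
  have hne : (2 : ZMod b) ≠ 1 := by
    intro h
    have h2 : ((2 : ℕ) : ZMod b) = ((1 : ℕ) : ZMod b) := by push_cast; exact h
    rw [ZMod.natCast_eq_natCast_iff] at h2
    have h3 : 2 % b = 1 % b := h2
    rw [Nat.mod_eq_of_lt (by omega), Nat.mod_eq_of_lt (by omega)] at h3
    exact absurd h3 (by norm_num)
  have horda : orderOf (2 : ZMod b) = a := by
    rcases (ha.eq_one_or_self_of_dvd _ hord) with h | h
    · exact absurd (orderOf_eq_one_iff.mp h) hne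
    · exact h
  have h2ne0 : (2 : ZMod b) ≠ 0 := by
    intro h
    have h2 : ((2 : ℕ) : ZMod b) = 0 := by push_cast; exact h
    rw [ZMod.natCast_eq_zero_iff] at h2
    have := Nat.le_of_dvd (by norm_num) h2
    omega
  have hfe := ZMod.pow_card_sub_one_eq_one h2ne0
  exact ⟨horda ▸ orderOf_dvd_of_pow_eq_one hfe, hpow⟩

lemma aux_size (s e : ℕ) (hs : 3 ≤ s) (he : 3 ≤ e)
    (h : (s * e + 2) ^ 2 < s * (s * (e + 1) + 1)) : False := by
  have h1 : s*s*3 ≤ s*s*e := Nat.mul_le_mul_left _ he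
  have h2 : s*s*1 ≤ s*s*e := Nat.mul_le_mul_left _ (by omega)
  have h3 : s*s*e*3 ≤ s*s*e*e := Nat.mul_le_mul_left _ he
  have h4 : s*1 ≤ s*s := Nat.mul_le_mul_left _ (by omega)
  nlinarith [h1, h2, h3, h4]

/-- Let `p ≡ 1 (mod 4)` and `q ≡ 3 (mod 4)` be primes with `(|q-p|+1)² < pq`. Then
`q ∤ 2^p - 1` and `p ∤ 2^q - 1`; equivalently `gcd(2^p - 1, q) = 1` and
`gcd(2^q - 1, p) = 1`. -/
theorem mersenne_coprime_to_other_prime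
    (p q : ℕ) (hp : p.Prime) (hq : q.Prime)
    (hp4 : p % 4 = 1) (hq4 : q % 4 = 3)
    (hsize : (((q : ℤ) - p).natAbs + 1) ^ 2 < p * q) :
    ¬ (q ∣ 2 ^ p - 1) ∧ ¬ (p ∣ 2 ^ q - 1) ∧
      Nat.gcd (2 ^ p - 1) q = 1 ∧ Nat.gcd (2 ^ q - 1) p = 1 := by
  have hp5 : 5 ≤ p := by
    have := hp.two_le
    rcases Nat.lt_or_ge p 5 with h | h
    · interval_cases p <;> omega
    · exact h
  have hq3 : 3 ≤ q := by have := hq.two_le; omega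
  have hA : ¬ (q ∣ 2 ^ p - 1) := by
    intro hdvd
    haveI := Fact.mk hq
    obtain ⟨hd, hpow⟩ := aux_order_dvd p q hp hq hq3 hdvd
    -- 2 is a square mod q
    have hsq : IsSquare (2 : ZMod q) := by
      refine ⟨2 ^ ((p + 1) / 2), ?_⟩
      rw [← pow_add]
      have hsum : (p + 1) / 2 + (p + 1) / 2 = p + 1 := by omega
      rw [hsum, pow_succ, hpow, one_mul]
    have hq8 : q % 8 = 7 := by
      have := (ZMod.exists_sq_eq_two_iff (by omega : q ≠ 2)).mp hsq
      omega
    obtain ⟨k, hk⟩ := hd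
    have hqk : q = p * k + 1 := by omega
    have hm := Nat.mul_mod p k 8
    have hp8 : p % 8 = 1 ∨ p % 8 = 5 := by omega
    have hk6 : 6 ≤ k := by
      rcases hp8 with h | h <;> rw [h] at hm <;> omega
    -- size contradiction
    have hqp : p < q := by nlinarith
    have hnat : ((q : ℤ) - p).natAbs = q - p := by omega
    rw [hnat] at hsize
    have hd1 : q - p + 1 = p * (k - 1) + 2 := by
      have : 1 ≤ k := by omega
      have : p * k = p * (k - 1) + p := by
        cases k with
        | zero => omega
        | succ n => simp [Nat.mul_succ]
      omega
    rw [hd1, hqk] at hsize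
    have hk5 : 5 ≤ k - 1 := by omega
    set e := k - 1 with he
    have hke : k = e + 1 := by omega
    rw [hke] at hsize
    exact aux_size p e (by omega) (by omega) hsize
  have hB : ¬ (p ∣ 2 ^ q - 1) := by
    intro hdvd
    obtain ⟨hd, hpow⟩ := aux_order_dvd q p hq hp (by omega) hdvd
    obtain ⟨m, hm⟩ := hd
    have hpm : p = q * m + 1 := by omega
    have hmm := Nat.mul_mod q m 4
    rw [hq4] at hmm
    have hm4 : m % 4 = 0 := by omega
    have hm1 : 1 ≤ m := by nlinarith
    have hm4' : 4 ≤ m := by omega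
    have hqp : q < p := by nlinarith
    have hnat : ((q : ℤ) - p).natAbs = p - q := by omega
    rw [hnat] at hsize
    have hd1 : p - q + 1 = q * (m - 1) + 2 := by
      have : q * m = q * (m - 1) + q := by
        cases m with
        | zero => omega
        | succ n => simp [Nat.mul_succ]
      omega
    rw [hd1, hpm] at hsize
    have hm3 : 3 ≤ m - 1 := by omega
    set e := m - 1 with he
    have hme : m = e + 1 := by omega
    rw [hme, Nat.mul_comm (q * (e + 1) + 1) q] at hsize
    exact aux_size q e (by omega) (by omega) hsize
  refine ⟨hA, hB, ?_, ?_⟩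
  · rw [Nat.gcd_comm]; exact (hq.coprime_iff_not_dvd).mpr hA
  · rw [Nat.gcd_comm]; exact (hp.coprime_iff_not_dvd).mpr hB
end

section
/- Let p > 3 be a prime such that q = p + 2 is also prime. Then no prime r with r ≡ 1 (mod p) divides (pq − 1)/2, and no prime r with r ≡ 1 (mod q) divides (pq − 1)/2. -/
lemma aux_no_div (n M r : ℕ) (hn : Odd n) (hn3 : 3 < n)
    (hMmod : M % n = n - 1) (hMlt : M < (2 * n + 1) * (n - 1))
    (hr : r.Prime) (hr1 : r % n = 1) : ¬ r ∣ M := by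
  rintro ⟨k, hk⟩
  have hr2 : r ≠ 2 := by
    intro h; rw [h, Nat.mod_eq_of_lt (by omega)] at hr1; omega
  have hrodd : Odd r := hr.odd_of_ne_two hr2
  have hdiv := Nat.div_add_mod r n
  set t := r / n with ht
  have hrt : r = n * t + 1 := by omega
  have htpos : 1 ≤ t := by
    rcases Nat.eq_zero_or_pos t with h | h
    · exfalso; rw [h, mul_zero] at hrt; exact hr.one_lt.ne' (by omega)
    · exact h
  have hnteven : Even (n * t) := by
    rcases hrodd with ⟨a, ha⟩; exact ⟨a, by omega⟩
  have hteven : Even t :=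
    (Nat.even_mul.mp hnteven).resolve_left (Nat.not_even_iff_odd.mpr hn)
  have hrge : 2 * n + 1 ≤ r := by
    have h2t : 2 ≤ t := by
      rcases hteven with ⟨a, ha⟩; omega
    have := Nat.mul_le_mul_left n h2t
    omega
  -- k ≡ -1 (mod n)
  have h1 : M % n = (k % n) % n := by
    rw [hk, Nat.mul_mod, hr1, one_mul]
  have h2 : (k % n) % n = k % n := Nat.mod_mod_of_dvd k dvd_rfl
  have hkmod : k % n = n - 1 := by omega
  have hkge : n - 1 ≤ k := by
    have := Nat.mod_le k n; omega
  have hbig : (2 * n + 1) * (n - 1) ≤ r * k := Nat.mul_le_mul hrge hkge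
  omega

/-- For twin primes `p > 3` and `q = p + 2`, no prime `r ≡ 1 (mod p)` divides
`(pq - 1)/2`, and no prime `r ≡ 1 (mod q)` divides `(pq - 1)/2`. -/
theorem twin_primes_no_divisor_of_half_pq_minus_one
    (p q : ℕ) (hp : p.Prime) (hq : q.Prime) (hp3 : 3 < p) (hq2 : q = p + 2) :
    ∀ r : ℕ, r.Prime →
      (r % p = 1 → ¬ r ∣ (p * q - 1) / 2) ∧ (r % q = 1 → ¬ r ∣ (p * q - 1) / 2) := by
  intro r hr
  have hpodd : Odd p := hp.odd_of_ne_two (by omega)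
  have hqodd : Odd q := by
    rcases hpodd with ⟨m, hm⟩; exact ⟨m + 1, by omega⟩
  obtain ⟨m, hm⟩ := hpodd.mul hqodd
  have hNdvd : (p * q - 1) / 2 ∣ p * q - 1 := ⟨2, by omega⟩
  have hMmodp : (p * q - 1) % p = p - 1 := by
    have h1 : p * (q - 1) + p * 1 = p * q := by
      rw [← Nat.mul_add]; congr 1; omega
    have h2 : p * q - 1 = (p - 1) + p * (q - 1) := by omega
    rw [h2, Nat.add_mul_mod_self_left, Nat.mod_eq_of_lt (by omega)]
  have hMmodq : (p * q - 1) % q = q - 1 := by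
    have h0 : p * q = q * p := Nat.mul_comm p q
    have h1 : q * (p - 1) + q * 1 = q * p := by
      rw [← Nat.mul_add]; congr 1; omega
    have h2 : p * q - 1 = (q - 1) + q * (p - 1) := by omega
    rw [h2, Nat.add_mul_mod_self_left, Nat.mod_eq_of_lt (by omega)]
  constructor
  · intro hr1 hdvd
    refine aux_no_div p (p * q - 1) r (hp.odd_of_ne_two (by omega)) hp3 hMmodp ?_
      hr hr1 (hdvd.trans hNdvd)
    have e1 : (2 * p + 1) * ((p - 1) + 1) = (2 * p + 1) * (p - 1) + (2 * p + 1) := by ring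
    have e2 : (p - 1) + 1 = p := by omega
    have e3 : (2 * p + 1) * p = 2 * (p * p) + p := by ring
    have e4 : p * q = p * p + 2 * p := by subst hq2; ring
    have e5 : 4 * p ≤ p * p := Nat.mul_le_mul_right p (by omega)
    rw [e2, e3] at e1
    omega
  · intro hr1 hdvd
    refine aux_no_div q (p * q - 1) r hqodd (by omega) hMmodq ?_
      hr hr1 (hdvd.trans hNdvd)
    have e1 : (2 * q + 1) * ((q - 1) + 1) = (2 * q + 1) * (q - 1) + (2 * q + 1) := by ring
    have e2 : (q - 1) + 1 = q := by omega
    have e3 : (2 * q + 1) * q = 2 * (q * q) + q := by ring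
    have e4 : p * q + 2 * q = q * q := by subst hq2; ring
    rw [e2, e3] at e1
    omega
end
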